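/- Let B be an HTL normal form B = diag(q_1(z⁻¹)I_{n_1}+R_1 z⁻¹, …, q_m(z⁻¹)I_{n_m}+R_m z⁻¹) of size n and pole order k. Let G^o_k := {I_n + Σ_{s=1}^{k−1} g_s z^s : g_s ∈ M(n,ℂ)} ⊆ GL(n, ℂ[z]/(z^k)), let (O^tru_B)^o := {g ι(B) g⁻¹ : g ∈ G^o_k}, let H := {diag(h_1,…,h_m) : h_j ∈ GL(n_j,ℂ)} ⊆ GL(n,ℂ), and let Ad_H((O^tru_B)^o) := {hAh⁻¹ : A ∈ (O^tru_B)^o, h ∈ H}. Then the map (g, A) ↦ gAg⁻¹ induces a well-defined bijection from GL(n,ℂ) ×_H Ad_H((O^tru_B)^o) — the quotient of GL(n,ℂ) × Ad_H((O^tru_B)^o) by the relation (g,A) ∼ (gh⁻¹, hAh⁻¹) for h ∈ H — onto the truncated orbit O^tru_B. -/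

import Mathlib

/-!
STATEMENT 6: the decomposition `GL(n,ℂ) ×_H Ad_H((O^tru_B)^o) ≅ O^tru_B` of a
truncated orbit.  Elements of `M(n, ℂ((z))/ℂ[[z]])` are encoded by their canonical
representatives (principal parts).
-/

open Matrix BigOperators

noncomputable section

/-- Evaluation of a polynomial at `z⁻¹`. -/
def polyZinv (q : Polynomial ℂ) : LaurentSeries ℂ :=
  q.sum fun k c => HahnSeries.single (-(k : ℤ)) c

/-- The principal part of a Laurent series (the canonical representative of its class
in `ℂ((z))/ℂ[[z]]`). -/
def prin (f : LaurentSeries ℂ) : LaurentSeries ℂ :=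
  { coeff := fun k => if k < 0 then f.coeff k else 0
    isPWO_support' := f.isPWO_support'.mono (by
      intro k hk
      simp only [Function.mem_support, ne_eq] at hk ⊢
      intro h
      apply hk
      split <;> simp [h]) }

/-- The principal part of a matrix of Laurent series: the canonical representative of
its image under `ι : M(n,ℂ((z))) → M(n,ℂ((z))/ℂ[[z]])`. -/
def prinM {n : ℕ} (M : Matrix (Fin n) (Fin n) (LaurentSeries ℂ)) :
    Matrix (Fin n) (Fin n) (LaurentSeries ℂ) := M.map prin

/-- `GL(n, ℂ[[z]])`. -/
abbrev GLps (n : ℕ) := (Matrix (Fin n) (Fin n) (PowerSeries ℂ))ˣ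

/-- `GL(n, ℂ)`. -/
abbrev GLc (n : ℕ) := (Matrix (Fin n) (Fin n) ℂ)ˣ

/-- The inclusion `GL(n, ℂ[[z]]) → GL(n, ℂ((z)))`. -/
def glMap {n : ℕ} : GLps n →* (Matrix (Fin n) (Fin n) (LaurentSeries ℂ))ˣ :=
  Units.map ((HahnSeries.ofPowerSeries ℤ ℂ).mapMatrix).toMonoidHom

/-- The inclusion `GL(n, ℂ) → GL(n, ℂ((z)))`. -/
def glC {n : ℕ} : GLc n →* (Matrix (Fin n) (Fin n) (LaurentSeries ℂ))ˣ :=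
  Units.map ((HahnSeries.C : ℂ →+* LaurentSeries ℂ).mapMatrix).toMonoidHom

/-- Conjugation of a matrix of Laurent series by `X ∈ GL(n, ℂ[[z]])`. -/
def conjPS {n : ℕ} (X : GLps n) (B : Matrix (Fin n) (Fin n) (LaurentSeries ℂ)) :
    Matrix (Fin n) (Fin n) (LaurentSeries ℂ) :=
  (glMap X).val * B * ((glMap X)⁻¹).val

/-- Conjugation by a constant invertible matrix. -/
def conjC {n : ℕ} (g : GLc n) (B : Matrix (Fin n) (Fin n) (LaurentSeries ℂ)) :
    Matrix (Fin n) (Fin n) (LaurentSeries ℂ) :=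
  (glC g).val * B * ((glC g)⁻¹).val

/-- The data of an HTL normal form of size `n`. -/
structure HTLData (n : ℕ) where
  m : ℕ
  nb : Fin m → ℕ
  hn : ∑ j, nb j = n
  q : Fin m → Polynomial ℂ
  hq0 : ∀ j, (q j).coeff 0 = 0
  hq1 : ∀ j, (q j).coeff 1 = 0
  hqd : ∀ j j', j ≠ j' → q j ≠ q j'
  R : (j : Fin m) → Matrix (Fin (nb j)) (Fin (nb j)) ℂ

namespace HTLData

variable {n : ℕ} (D : HTLData n)

/-- Identification of the disjoint union of the blocks with `Fin n`. -/
def sigmaEquiv : (Σ j : Fin D.m, Fin (D.nb j)) ≃ Fin n :=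
  Fintype.equivFinOfCardEq (by simpa using D.hn)

/-- The matrix of the HTL normal form. -/
def mat : Matrix (Fin n) (Fin n) (LaurentSeries ℂ) :=
  Matrix.reindex D.sigmaEquiv D.sigmaEquiv
    (Matrix.blockDiagonal' fun j =>
      (fun a b => (if a = b then polyZinv (D.q j) else 0) +
        HahnSeries.single (-1 : ℤ) (D.R j a b)))

/-- The block of an index. -/
def blk (a : Fin n) : Fin D.m := (D.sigmaEquiv.symm a).1

/-- The truncated orbit `O^tru_B` (canonical representatives). -/
def Otru : Set (Matrix (Fin n) (Fin n) (LaurentSeries ℂ)) :=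
  {M | ∃ X : GLps n, M = prinM (conjPS X D.mat)}

/-- `(O^tru_B)^o`: the part of the truncated orbit obtained from the subgroup
`G^o_k ⊆ GL(n, ℂ[z]/(z^k))`, i.e. from those `X ∈ GL(n,ℂ[[z]])` with constant
coefficient `1` (acting through lifts). -/
def OtruO : Set (Matrix (Fin n) (Fin n) (LaurentSeries ℂ)) :=
  {M | ∃ X : GLps n, X.val.map (PowerSeries.constantCoeff : PowerSeries ℂ →+* ℂ) = 1 ∧
    M = prinM (conjPS X D.mat)}

/-- The group `H = {diag(h_1, …, h_m)} ⊆ GL(n,ℂ)` of block-diagonal constant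
matrices. -/
def Hgrp : Set (GLc n) := {h | ∀ a b, D.blk a ≠ D.blk b → h.val a b = 0}

/-- `Ad_H((O^tru_B)^o)`. -/
def AdH : Set (Matrix (Fin n) (Fin n) (LaurentSeries ℂ)) :=
  {M | ∃ h ∈ D.Hgrp, ∃ M0 ∈ D.OtruO, M = conjC h M0}

end HTLData

end

/-!
Write `X ∈ GL(n, ℂ[[z]])` as `X = c · Y` with `c = X(0)` constant and `Y(0) = 1`; since
conjugation by constants commutes with taking principal parts, every point of `O^tru_B` is
`c A c⁻¹` with `A ∈ (O^tru_B)^o`. For injectivity, suppose the constant `c` conjugates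
`prin(X₁ B X₁⁻¹)` into `prin(X₂ B X₂⁻¹)` with `X₁(0) = X₂(0) = 1`. Then
`W = X₂⁻¹ c X₁ ∈ GL(n, ℂ[[z]])` has `W(0) = c` and `W B - B W` holomorphic. In the entry
`(a, b)`, the coefficient of `z^{-d}`, `d = deg (q_b - q_a)`, of `W B - B W` is `W_ab(0)` times
the leading coefficient of `q_b - q_a`: as `q_b - q_a` has no linear term, `d ≥ 2` and the
residue part `z⁻¹ R` does not reach that order. Hence `c_ab = 0` for `a`, `b` in different
blocks, i.e. `c ∈ H`.
-/

open HahnSeries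

noncomputable section

theorem LaurentSeries.mem_range_ofPowerSeries_iff {R : Type*} [CommRing R]
    {f : LaurentSeries R} :
    f ∈ (ofPowerSeries ℤ R).range ↔ ∀ t < 0, f.coeff t = 0 := by
  constructor
  · rintro ⟨g, rfl⟩ t ht
    rw [PowerSeries.coeff_coe, if_pos ht]
  · intro h
    refine ⟨PowerSeries.mk fun k => f.coeff k, ?_⟩
    ext t
    rw [PowerSeries.coeff_coe]
    split_ifs with ht
    · exact (h t ht).symm
    · rw [PowerSeries.coeff_mk, Int.natAbs_of_nonneg (not_lt.1 ht)]

section PowerSeriesMatrices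

variable (ι R : Type*) [Fintype ι] [DecidableEq ι] [CommRing R]

abbrev powerSeriesMatrices : Subring (Matrix ι ι (LaurentSeries R)) :=
  (ofPowerSeries ℤ R).mapMatrix.range

variable {ι R}

theorem mem_powerSeriesMatrices_iff {M : Matrix ι ι (LaurentSeries R)} :
    M ∈ powerSeriesMatrices ι R ↔ ∀ a b, ∀ t < 0, (M a b).coeff t = 0 := by
  simp only [← LaurentSeries.mem_range_ofPowerSeries_iff]
  constructor
  · rintro ⟨N, rfl⟩ a b
    exact ⟨N a b, rfl⟩
  · intro h
    choose N hN using h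
    exact ⟨Matrix.of N, Matrix.ext hN⟩

theorem map_C_mem_powerSeriesMatrices (K : Matrix ι ι R) :
    K.map HahnSeries.C ∈ powerSeriesMatrices ι R :=
  ⟨K.map PowerSeries.C, by ext; simp [ofPowerSeries_C]⟩

theorem coeff_commutator_diagonal_add_smul_apply {F : Matrix ι ι (LaurentSeries R)}
    (hF : F ∈ powerSeriesMatrices ι R) (d : ι → LaurentSeries R) (K : Matrix ι ι R)
    (a b : ι) {t : ℤ} (ht : t < -1) :
    ((F * (diagonal d + single (-1) (1 : R) • K.map HahnSeries.C) -
        (diagonal d + single (-1) (1 : R) • K.map HahnSeries.C) * F :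
        Matrix ι ι (LaurentSeries R)) a b).coeff t =
      (F a b * (d b - d a)).coeff t := by
  set K' : Matrix ι ι (LaurentSeries R) := K.map HahnSeries.C
  have hK' := map_C_mem_powerSeriesMatrices K
  have hsplit : F * (diagonal d + single (-1) (1 : R) • K') -
      (diagonal d + single (-1) (1 : R) • K') * F =
      (F * diagonal d - diagonal d * F) + single (-1) (1 : R) • (F * K' - K' * F) := by
    rw [mul_add, add_mul, Matrix.mul_smul, Matrix.smul_mul, smul_sub]
    abel
  have hres : ((F * K' - K' * F) a b).coeff (t + 1) = 0 :=
    mem_powerSeriesMatrices_iff.1 (sub_mem (mul_mem hF hK') (mul_mem hK' hF)) a b _ (by omega)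
  have hshift := coeff_single_mul_add (Γ := ℤ) (r := (1 : R)) (x := (F * K' - K' * F) a b)
    (a := t + 1) (b := -1)
  rw [add_neg_cancel_right, hres, one_mul] at hshift
  rw [hsplit, Matrix.add_apply, Matrix.smul_apply, smul_eq_mul, coeff_add, hshift, add_zero,
    Matrix.sub_apply, Matrix.mul_diagonal, Matrix.diagonal_mul, mul_sub, mul_comm (d a)]

end PowerSeriesMatrices

theorem Polynomial.two_le_natDegree_of_coeff_zero_of_coeff_one {R : Type*} [Semiring R]
    {p : Polynomial R} (hp : p ≠ 0) (h0 : p.coeff 0 = 0) (h1 : p.coeff 1 = 0) :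
    2 ≤ p.natDegree := by
  by_contra! h
  exact hp (by rw [Polynomial.eq_X_add_C_of_natDegree_le_one (p := p) (by omega), h0, h1]; simp)

theorem polyZinv_add (p q : Polynomial ℂ) : polyZinv (p + q) = polyZinv p + polyZinv q :=
  Polynomial.sum_add_index _ _ _ (fun _ => single_eq_zero) (fun _ _ _ => single_add _ _ _)

theorem polyZinv_sub (p q : Polynomial ℂ) : polyZinv (p - q) = polyZinv p - polyZinv q :=
  eq_sub_of_add_eq (by rw [← polyZinv_add, sub_add_cancel])

theorem coeff_ofPowerSeries_mul_polyZinv_neg_natDegree (w : PowerSeries ℂ) (p : Polynomial ℂ) :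
    (ofPowerSeries ℤ ℂ w * polyZinv p).coeff (-p.natDegree) =
      PowerSeries.constantCoeff w * p.leadingCoeff := by
  have hterm (k : ℕ) :
      (ofPowerSeries ℤ ℂ w * single (-(k : ℤ)) (p.coeff k)).coeff (-p.natDegree) =
        (ofPowerSeries ℤ ℂ w).coeff (k - p.natDegree) * p.coeff k := by
    rw [← coeff_mul_single_add]
    congr 1
    ring
  rw [polyZinv, Polynomial.sum_def, Finset.mul_sum, coeff_sum,
    Finset.sum_congr rfl fun k _ => hterm k, Finset.sum_eq_single p.natDegree]
  · rw [sub_self, PowerSeries.coeff_coe, if_neg (lt_irrefl 0), Int.natAbs_zero,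
      PowerSeries.coeff_zero_eq_constantCoeff_apply, Polynomial.leadingCoeff]
  · intro k hk hne
    have hlt : (k : ℤ) - p.natDegree < 0 := by
      have := Polynomial.le_natDegree_of_mem_supp k hk
      omega
    rw [PowerSeries.coeff_coe, if_pos hlt, zero_mul]
  · intro hN
    rw [Polynomial.notMem_support_iff.1 hN, mul_zero]

section ConstantCoefficient

variable {ι R : Type*} [Fintype ι] [DecidableEq ι] [CommRing R]

def constGL : (Matrix ι ι R)ˣ →* (Matrix ι ι (PowerSeries R))ˣ :=
  Units.map (PowerSeries.C (R := R)).mapMatrix.toMonoidHom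

def constCoeffGL : (Matrix ι ι (PowerSeries R))ˣ →* (Matrix ι ι R)ˣ :=
  Units.map (PowerSeries.constantCoeff (R := R)).mapMatrix.toMonoidHom

theorem constCoeffGL_eq_one_iff {X : (Matrix ι ι (PowerSeries R))ˣ} :
    constCoeffGL X = 1 ↔ X.val.map PowerSeries.constantCoeff = 1 :=
  Units.ext_iff

@[simp]
theorem constCoeffGL_constGL (g : (Matrix ι ι R)ˣ) : constCoeffGL (constGL g) = g := by
  ext a b
  simp [constCoeffGL, constGL]

end ConstantCoefficient

section Conjugation

variable {n : ℕ}

theorem glMap_constGL (g : GLc n) : glMap (constGL g) = glC g := by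
  ext a b : 2
  exact ofPowerSeries_C _

theorem conjPS_constGL (g : GLc n) (B : Matrix (Fin n) (Fin n) (LaurentSeries ℂ)) :
    conjPS (constGL g) B = conjC g B := by
  rw [conjPS, conjC, glMap_constGL]

theorem conjPS_mul (X Y : GLps n) (B : Matrix (Fin n) (Fin n) (LaurentSeries ℂ)) :
    conjPS (X * Y) B = conjPS X (conjPS Y B) := by
  simp only [conjPS, map_mul, _root_.mul_inv_rev, Units.val_mul, Matrix.mul_assoc]

theorem conjC_mul (g h : GLc n) (M : Matrix (Fin n) (Fin n) (LaurentSeries ℂ)) :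
    conjC g (conjC h M) = conjC (g * h) M := by
  simp only [conjC, map_mul, _root_.mul_inv_rev, Units.val_mul, Matrix.mul_assoc]

theorem conjC_one (M : Matrix (Fin n) (Fin n) (LaurentSeries ℂ)) : conjC 1 M = M := by
  simp only [conjC, map_one, inv_one, Units.val_one, Matrix.one_mul, Matrix.mul_one]

theorem conjC_eq_conjC_iff {g g' : GLc n} {M M' : Matrix (Fin n) (Fin n) (LaurentSeries ℂ)} :
    conjC g M = conjC g' M' ↔ conjC (g'⁻¹ * g) M = M' := by
  constructor
  · intro h
    rw [← conjC_mul, h, conjC_mul, inv_mul_cancel, conjC_one]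
  · rintro rfl
    rw [conjC_mul, mul_inv_cancel_left]

theorem glMap_val_mem_powerSeriesMatrices (X : GLps n) :
    (glMap X).val ∈ powerSeriesMatrices (Fin n) ℂ :=
  ⟨X.val, rfl⟩

theorem glMap_inv_val_mem_powerSeriesMatrices (X : GLps n) :
    ((glMap X)⁻¹).val ∈ powerSeriesMatrices (Fin n) ℂ := by
  rw [← map_inv]
  exact glMap_val_mem_powerSeriesMatrices _

end Conjugation

section PrincipalPart

@[simp]
theorem coeff_prin (f : LaurentSeries ℂ) (t : ℤ) :
    (prin f).coeff t = if t < 0 then f.coeff t else 0 :=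
  rfl

def prinₗ : LaurentSeries ℂ →ₗ[ℂ] LaurentSeries ℂ where
  toFun := prin
  map_add' f g := by
    ext t
    by_cases ht : t < 0 <;> simp [ht]
  map_smul' c f := by
    ext t
    by_cases ht : t < 0 <;> simp [ht]

variable {n : ℕ}

theorem prinM_map_C_mul (P : Matrix (Fin n) (Fin n) ℂ)
    (N : Matrix (Fin n) (Fin n) (LaurentSeries ℂ)) :
    prinM (P.map HahnSeries.C * N) = P.map HahnSeries.C * prinM N := by
  ext a b : 1
  simp only [prinM, map_apply, mul_apply, C_mul_eq_smul]
  exact map_sum prinₗ _ _ |>.trans (Finset.sum_congr rfl fun c _ => map_smul prinₗ _ _)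

theorem prinM_mul_map_C (P : Matrix (Fin n) (Fin n) ℂ)
    (N : Matrix (Fin n) (Fin n) (LaurentSeries ℂ)) :
    prinM (N * P.map HahnSeries.C) = prinM N * P.map HahnSeries.C := by
  ext a b : 1
  simp only [prinM, map_apply, mul_apply, mul_comm _ (HahnSeries.C _), C_mul_eq_smul]
  exact map_sum prinₗ _ _ |>.trans (Finset.sum_congr rfl fun c _ => map_smul prinₗ _ _)

theorem prinM_conjC (g : GLc n) (N : Matrix (Fin n) (Fin n) (LaurentSeries ℂ)) :
    prinM (conjC g N) = conjC g (prinM N) := by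
  rw [conjC, ← map_inv]
  exact (prinM_mul_map_C _ _).trans (congrArg (· * _) (prinM_map_C_mul _ _))

theorem sub_mem_powerSeriesMatrices_of_prinM_eq {M N : Matrix (Fin n) (Fin n) (LaurentSeries ℂ)}
    (h : prinM M = prinM N) : M - N ∈ powerSeriesMatrices (Fin n) ℂ := by
  refine mem_powerSeriesMatrices_iff.2 fun a b t ht => ?_
  have := congrArg (fun M => (M a b).coeff t) h
  simp only [prinM, map_apply, coeff_prin, if_pos ht] at this
  rw [Matrix.sub_apply, coeff_sub, this, sub_self]

end PrincipalPart

namespace HTLData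

variable {n : ℕ} (D : HTLData n)

def resMat : Matrix (Fin n) (Fin n) ℂ :=
  reindex D.sigmaEquiv D.sigmaEquiv (blockDiagonal' D.R)

theorem mat_eq : D.mat = diagonal (fun a => polyZinv (D.q (D.blk a))) +
    HahnSeries.single (-1) (1 : ℂ) • D.resMat.map HahnSeries.C := by
  ext a b : 1
  obtain ⟨⟨j, x⟩, rfl⟩ := D.sigmaEquiv.surjective a
  obtain ⟨⟨j', y⟩, rfl⟩ := D.sigmaEquiv.surjective b
  simp only [mat, resMat, blk, reindex_apply, submatrix_apply, Equiv.symm_apply_apply,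
    Matrix.add_apply, Matrix.smul_apply, map_apply, diagonal_apply, D.sigmaEquiv.injective.eq_iff,
    smul_eq_mul, C_apply, single_mul_single, one_mul]
  rcases eq_or_ne j j' with rfl | hj
  · by_cases hxy : x = y <;> simp [blockDiagonal', hxy]
  · simp [blockDiagonal', hj]

theorem two_le_natDegree_q_sub {j j' : Fin D.m} (h : j ≠ j') : 2 ≤ (D.q j - D.q j').natDegree :=
  Polynomial.two_le_natDegree_of_coeff_zero_of_coeff_one (sub_ne_zero.2 (D.hqd j j' h))
    (by rw [Polynomial.coeff_sub, D.hq0, D.hq0, sub_zero])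
    (by rw [Polynomial.coeff_sub, D.hq1, D.hq1, sub_zero])

theorem constantCoeff_eq_zero_of_commutator_mem {W : Matrix (Fin n) (Fin n) (PowerSeries ℂ)}
    (hW : W.map (ofPowerSeries ℤ ℂ) * D.mat - D.mat * W.map (ofPowerSeries ℤ ℂ) ∈
      powerSeriesMatrices (Fin n) ℂ)
    {a b : Fin n} (hab : D.blk a ≠ D.blk b) : PowerSeries.constantCoeff (W a b) = 0 := by
  set p := D.q (D.blk b) - D.q (D.blk a)
  have hdeg : 2 ≤ p.natDegree := D.two_le_natDegree_q_sub hab.symm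
  have hF : W.map (ofPowerSeries ℤ ℂ) ∈ powerSeriesMatrices (Fin n) ℂ := ⟨W, rfl⟩
  have h := mem_powerSeriesMatrices_iff.1 hW a b (-p.natDegree) (by omega)
  rw [mat_eq, coeff_commutator_diagonal_add_smul_apply hF _ _ _ _ (by omega), map_apply,
    ← polyZinv_sub, coeff_ofPowerSeries_mul_polyZinv_neg_natDegree] at h
  exact (mul_eq_zero.1 h).resolve_right
    (Polynomial.leadingCoeff_ne_zero.2 (sub_ne_zero.2 (D.hqd _ _ hab.symm)))

/-- `H` is a centralizer, hence closed under inverses. -/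
theorem mem_Hgrp_iff_commute {h : GLc n} :
    h ∈ D.Hgrp ↔ Commute h.val (diagonal fun a => ((D.blk a : ℕ) : ℂ)) := by
  simp only [Hgrp, Set.mem_ofPred_eq, Commute, SemiconjBy, ← Matrix.ext_iff, mul_diagonal,
    diagonal_mul]
  refine forall₂_congr fun a b => ?_
  have hcast : ((D.blk b : ℕ) : ℂ) = D.blk a ↔ D.blk a = D.blk b := by
    rw [Nat.cast_inj, Fin.val_inj, eq_comm]
  rw [← sub_eq_zero (a := h.val a b * _), mul_comm (h.val a b), ← sub_mul, mul_eq_zero,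
    sub_eq_zero, hcast, or_iff_not_imp_left]

def Hsubgroup : Subgroup (GLc n) where
  carrier := D.Hgrp
  one_mem' := D.mem_Hgrp_iff_commute.2 (Commute.one_left _)
  mul_mem' ha hb := D.mem_Hgrp_iff_commute.2 <| by
    simpa using (D.mem_Hgrp_iff_commute.1 ha).mul_left (D.mem_Hgrp_iff_commute.1 hb)
  inv_mem' ha := D.mem_Hgrp_iff_commute.2 (D.mem_Hgrp_iff_commute.1 ha).units_inv_left

theorem OtruO_subset_AdH : D.OtruO ⊆ D.AdH :=
  fun M hM => ⟨1, D.Hsubgroup.one_mem, M, hM, (conjC_one M).symm⟩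

theorem conjC_prinM_conjPS (g : GLc n) (X : GLps n) :
    conjC g (prinM (conjPS X D.mat)) = prinM (conjPS (constGL g * X) D.mat) := by
  rw [← prinM_conjC, conjPS_mul, conjPS_constGL]

theorem mem_Hgrp_of_conjC_prinM_eq {X₁ X₂ : GLps n} (h₁ : constCoeffGL X₁ = 1)
    (h₂ : constCoeffGL X₂ = 1) {c : GLc n}
    (h : conjC c (prinM (conjPS X₁ D.mat)) = prinM (conjPS X₂ D.mat)) : c ∈ D.Hgrp := by
  intro a b hab
  set Y := constGL c * X₁
  set W := X₂⁻¹ * Y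
  have hW : constCoeffGL W = c := by simp [W, Y, h₁, h₂]
  have hcomm : (glMap W).val * D.mat - D.mat * (glMap W).val =
      ((glMap X₂)⁻¹).val * (conjPS Y D.mat - conjPS X₂ D.mat) * (glMap Y).val := by
    simp only [W, conjPS, map_mul, map_inv, Units.val_mul, mul_sub, sub_mul, mul_assoc,
      Units.inv_mul, Units.inv_mul_cancel_left, mul_one]
  have hmem :
      (glMap W).val * D.mat - D.mat * (glMap W).val ∈ powerSeriesMatrices (Fin n) ℂ := by
    rw [hcomm]
    refine mul_mem (mul_mem (glMap_inv_val_mem_powerSeriesMatrices X₂) ?_)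
      (glMap_val_mem_powerSeriesMatrices Y)
    exact sub_mem_powerSeriesMatrices_of_prinM_eq (by rwa [conjC_prinM_conjPS] at h)
  rw [← hW]
  exact D.constantCoeff_eq_zero_of_commutator_mem hmem hab

theorem mem_Hgrp_of_conjC_eq {k : GLc n} {M M' : Matrix (Fin n) (Fin n) (LaurentSeries ℂ)}
    (hM : M ∈ D.AdH) (hM' : M' ∈ D.AdH) (h : conjC k M = M') : k ∈ D.Hgrp := by
  obtain ⟨h₁, hh₁, A₁, ⟨X₁, hX₁, rfl⟩, rfl⟩ := hM
  obtain ⟨h₂, hh₂, A₂, ⟨X₂, hX₂, rfl⟩, rfl⟩ := hM'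
  have hc : h₂⁻¹ * (k * h₁) ∈ D.Hsubgroup :=
    D.mem_Hgrp_of_conjC_prinM_eq (constCoeffGL_eq_one_iff.2 hX₁) (constCoeffGL_eq_one_iff.2 hX₂)
      (conjC_eq_conjC_iff.1 (by rwa [conjC_mul] at h))
  have hk : k = h₂ * (h₂⁻¹ * (k * h₁)) * h₁⁻¹ := by group
  rw [hk]
  exact D.Hsubgroup.mul_mem (D.Hsubgroup.mul_mem hh₂ hc) (D.Hsubgroup.inv_mem hh₁)

end HTLData

end

/-- STATEMENT 6: `(g, A) ↦ gAg⁻¹` induces a well-defined bijection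
`GL(n,ℂ) ×_H Ad_H((O^tru_B)^o) → O^tru_B`:
(i) the map lands in `O^tru_B`; (ii) it is onto `O^tru_B`; (iii) two pairs have the
same image iff they are related by the `H`-twist `(g,A) ∼ (gh⁻¹, hAh⁻¹)`. -/
theorem truncated_orbit_decomposition (n : ℕ) (D : HTLData n) :
    (∀ (g : GLc n), ∀ M ∈ D.AdH, conjC g M ∈ D.Otru)
    ∧ (∀ M' ∈ D.Otru, ∃ g : GLc n, ∃ M ∈ D.AdH, M' = conjC g M)
    ∧ (∀ (g g' : GLc n), ∀ M ∈ D.AdH, ∀ M' ∈ D.AdH,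
        (conjC g M = conjC g' M' ↔ ∃ h ∈ D.Hgrp, g' = g * h⁻¹ ∧ M' = conjC h M)) := by
  refine ⟨?_, ?_, ?_⟩
  · rintro g M ⟨h, -, M₀, ⟨X, -, rfl⟩, rfl⟩
    exact ⟨constGL (g * h) * X, by rw [conjC_mul, D.conjC_prinM_conjPS]⟩
  · rintro M' ⟨X, rfl⟩
    set g := constCoeffGL X
    refine ⟨g, _, D.OtruO_subset_AdH ⟨constGL g⁻¹ * X, ?_, rfl⟩, ?_⟩
    · exact constCoeffGL_eq_one_iff.1 (by simp [g])
    · rw [D.conjC_prinM_conjPS, map_inv, mul_inv_cancel_left]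
  · intro g g' M hM M' hM'
    rw [conjC_eq_conjC_iff]
    constructor
    · intro heq
      exact ⟨g'⁻¹ * g, D.mem_Hgrp_of_conjC_eq hM hM' heq, by group, heq.symm⟩
    · rintro ⟨h, -, rfl, rfl⟩
      rw [_root_.mul_inv_rev, inv_inv, inv_mul_cancel_right]
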